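/- Let n ≥ 4 and let k be an algebraically closed field of characteristic zero. Let M be an invertible (n+1)×(n+1) matrix over k such that for every x ∈ k^{n+1} satisfying the Büchi system of length n, the vector Mx also satisfies the Büchi system of length n. Then M is a monomial matrix, i.e., every row and every column of M contains exactly one nonzero entry. (Equivalently, every linear automorphism of the Büchi surface X_n with n ≥ 4 is a scalar permutation of the homogeneous coordinates.) -/
import Mathlib
set_option linter.unusedSectionVars false


/-- A vector `x = (x_0, …, x_n)` satisfies the Büchi system of length `n`:
`x_{i+2}² − 2x_{i+1}² + x_i² − 2x_0² = 0` for all `i ∈ {1,…,n−2}`. -/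
def SatisfiesBuchi (n : ℕ) {k : Type*} [CommRing k] (x : Fin (n + 1) → k) : Prop :=
  ∀ i : ℕ, 1 ≤ i → ∀ h : i + 2 ≤ n,
    x ⟨i + 2, by omega⟩ ^ 2 - 2 * x ⟨i + 1, by omega⟩ ^ 2
      + x ⟨i, by omega⟩ ^ 2 - 2 * x ⟨0, by omega⟩ ^ 2 = 0

section
variable {k : Type*} [Field k] [IsAlgClosed k] [CharZero k]

lemma buchi_of_sq_eq {n : ℕ} {x y : Fin (n+1) → k} (hx : SatisfiesBuchi n x)
    (h : ∀ p, y p ^ 2 = x p ^ 2) : SatisfiesBuchi n y := by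
  intro i h1 h2
  rw [h, h, h, h]
  exact hx i h1 h2

lemma rel_of_pres {n : ℕ} (M : Matrix (Fin (n+1)) (Fin (n+1)) k)
    (hpres : ∀ x, SatisfiesBuchi n x → SatisfiesBuchi n (M.mulVec x))
    {u v : Fin (n+1)} (huv : u ≠ v) :
    ∀ i : ℕ, 1 ≤ i → ∀ h : i + 2 ≤ n,
      M ⟨i+2, by omega⟩ u * M ⟨i+2, by omega⟩ v
        - 2 * (M ⟨i+1, by omega⟩ u * M ⟨i+1, by omega⟩ v)
        + M ⟨i, by omega⟩ u * M ⟨i, by omega⟩ v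
        - 2 * (M ⟨0, by omega⟩ u * M ⟨0, by omega⟩ v) = 0 := by
  have hs : ∀ l : Fin (n+1), ∃ z : k, z ^ 2 = (((l:ℕ)^2 + 1 : ℕ) : k) := fun l =>
    IsAlgClosed.exists_pow_nat_eq _ (n := 2) (by norm_num)
  choose s hs2 using hs
  have hsq : ∀ l, s l ^ 2 = ((l:ℕ):k)^2 + 1 := by
    intro l; rw [hs2]; push_cast; ring
  have hsne : ∀ l, s l ≠ 0 := by
    intro l hl
    have h0 := hs2 l
    rw [hl] at h0
    have : (((l:ℕ)^2 + 1 : ℕ) : k) = 0 := by rw [← h0]; ring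
    exact (Nat.cast_ne_zero.mpr (Nat.succ_ne_zero _)) this
  have hsat : SatisfiesBuchi n s := by
    intro i h1 h2
    rw [hsq, hsq, hsq, hsq]
    push_cast
    ring
  intro i h1 h2
  set y : k → k → Fin (n+1) → k := fun d1 d2 p =>
    s p + (if p = u then (d1 - 1) * s u else 0) + (if p = v then (d2 - 1) * s v else 0)
    with hy
  have hysat : ∀ d1 d2 : k, d1^2 = 1 → d2^2 = 1 → SatisfiesBuchi n (y d1 d2) := by
    intro d1 d2 e1 e2
    apply buchi_of_sq_eq hsat
    intro p
    by_cases hpu : p = u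
    · subst hpu
      have h1' : y d1 d2 p = d1 * s p := by
        simp [hy, huv]; ring
      rw [h1', mul_pow, e1, one_mul]
    · by_cases hpv : p = v
      · subst hpv
        have h1' : y d1 d2 p = d2 * s p := by
          simp [hy, hpu]; ring
        rw [h1', mul_pow, e2, one_mul]
      · simp [hy, hpu, hpv]
  have hmv : ∀ (d1 d2 : k) (l : Fin (n+1)), M.mulVec (y d1 d2) l
      = M.mulVec s l + (d1 - 1) * (M l u * s u) + (d2 - 1) * (M l v * s v) := by
    intro d1 d2 l
    simp only [Matrix.mulVec, dotProduct, hy, mul_add, Finset.sum_add_distrib,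
      mul_ite, mul_zero, Finset.sum_ite_eq', Finset.mem_univ, if_true]
    ring
  have h11 := hpres _ (hysat 1 1 (by norm_num) (by norm_num)) i h1 h2
  have hm1 := hpres _ (hysat (-1) 1 (by norm_num) (by norm_num)) i h1 h2
  have h1m := hpres _ (hysat 1 (-1) (by norm_num) (by norm_num)) i h1 h2
  have hmm := hpres _ (hysat (-1) (-1) (by norm_num) (by norm_num)) i h1 h2
  simp only [hmv] at h11 hm1 h1m hmm
  have hkey : ((8 : k) * (s u * s v)) *
      (M ⟨i+2, by omega⟩ u * M ⟨i+2, by omega⟩ v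
        - 2 * (M ⟨i+1, by omega⟩ u * M ⟨i+1, by omega⟩ v)
        + M ⟨i, by omega⟩ u * M ⟨i, by omega⟩ v
        - 2 * (M ⟨0, by omega⟩ u * M ⟨0, by omega⟩ v)) = 0 := by
    linear_combination h11 - hm1 - h1m + hmm
  have h8 : ((8 : k) * (s u * s v)) ≠ 0 :=
    mul_ne_zero (by norm_num) (mul_ne_zero (hsne u) (hsne v))
  exact (mul_eq_zero.mp hkey).resolve_left h8

end

section
variable {k : Type*} [Field k] [CharZero k]

lemma closed_form {n : ℕ} (hn : 4 ≤ n) (M : Matrix (Fin (n+1)) (Fin (n+1)) k)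
    (u v : Fin (n+1))
    (hR : ∀ i : ℕ, 1 ≤ i → ∀ h : i + 2 ≤ n,
      M ⟨i+2, by omega⟩ u * M ⟨i+2, by omega⟩ v
        - 2 * (M ⟨i+1, by omega⟩ u * M ⟨i+1, by omega⟩ v)
        + M ⟨i, by omega⟩ u * M ⟨i, by omega⟩ v
        - 2 * (M ⟨0, by omega⟩ u * M ⟨0, by omega⟩ v) = 0) :
    ∀ l : ℕ, 1 ≤ l → ∀ hl : l ≤ n,
      M ⟨l, by omega⟩ u * M ⟨l, by omega⟩ v
        = (M ⟨0, by omega⟩ u * M ⟨0, by omega⟩ v) * (l:k)^2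
          + (M ⟨2, by omega⟩ u * M ⟨2, by omega⟩ v - M ⟨1, by omega⟩ u * M ⟨1, by omega⟩ v
              - 3 * (M ⟨0, by omega⟩ u * M ⟨0, by omega⟩ v)) * (l:k)
          + (2 * (M ⟨1, by omega⟩ u * M ⟨1, by omega⟩ v) - M ⟨2, by omega⟩ u * M ⟨2, by omega⟩ v
              + 2 * (M ⟨0, by omega⟩ u * M ⟨0, by omega⟩ v)) := by
  set H : ℕ → k := fun l => if h : l ≤ n then M ⟨l, by omega⟩ u * M ⟨l, by omega⟩ v else 0 with hH
  have hHeq : ∀ l (hl : l ≤ n), H l = M ⟨l, by omega⟩ u * M ⟨l, by omega⟩ v := by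
    intro l hl; simp only [hH, dif_pos hl]
  have hR' : ∀ i : ℕ, 1 ≤ i → i + 2 ≤ n →
      H (i+2) - 2 * H (i+1) + H i - 2 * H 0 = 0 := by
    intro i h1 h2
    rw [hHeq (i+2) (by omega), hHeq (i+1) (by omega), hHeq i (by omega), hHeq 0 (by omega)]
    exact hR i h1 h2
  have key : ∀ m : ℕ,
      (m + 1 ≤ n → H (m+1) = H 0 * ((m:k)+1)^2 + (H 2 - H 1 - 3 * H 0) * ((m:k)+1)
          + (2 * H 1 - H 2 + 2 * H 0)) ∧
      (m + 2 ≤ n → H (m+2) = H 0 * ((m:k)+2)^2 + (H 2 - H 1 - 3 * H 0) * ((m:k)+2)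
          + (2 * H 1 - H 2 + 2 * H 0)) := by
    intro m
    induction m with
    | zero =>
        constructor
        · intro _
          norm_num
          ring
        · intro _
          norm_num
          ring
    | succ m ih =>
        constructor
        · intro h
          have this1 := ih.2 (by omega)
          have e2 : m + 1 + 1 = m + 2 := by omega
          rw [e2]
          push_cast at this1 ⊢
          linear_combination this1
        · intro h
          have e := hR' (m+1) (by omega) (by omega)
          have i1 := ih.1 (by omega)
          have i2 := ih.2 (by omega)
          have e2 : m + 1 + 2 = m + 3 := by omega
          have e3 : m + 1 + 1 = m + 2 := by omega
          rw [e2] at e ⊢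
          rw [e3] at e
          push_cast at i1 i2 ⊢
          linear_combination e + 2 * i2 - i1
  intro l h1 hl
  obtain ⟨m, rfl⟩ : ∃ m, l = m + 1 := ⟨l - 1, by omega⟩
  have hkm := (key m).1 (by omega)
  rw [hHeq (m+1) (by omega), hHeq 0 (by omega), hHeq 1 (by omega), hHeq 2 (by omega)] at hkm
  push_cast
  linear_combination hkm
end

section
variable {k : Type*} [Field k]
variable {n : ℕ}

lemma rows_support (M : Matrix (Fin (n+1)) (Fin (n+1)) k) (hM : IsUnit M)
    (r : Fin 4 → Fin (n+1)) (hr : Function.Injective r)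
    (φ : Fin 4 → k) (hφ : ∀ t, φ t ≠ 0)
    (hpair : ∀ u v : Fin (n+1), u ≠ v → ∑ t : Fin 4, φ t * M (r t) u * M (r t) v = 0) :
    ∃ G : Finset (Fin (n+1)), G.card ≤ 4 ∧ ∀ t u, M (r t) u ≠ 0 → u ∈ G := by
  classical
  obtain ⟨U, hU⟩ := hM
  have hMN : M * (↑U⁻¹ : Matrix _ _ k) = 1 := by rw [← hU]; exact U.mul_inv
  set ψ : Fin (n+1) → k := fun x => ∑ t : Fin 4, φ t * M (r t) x * M (r t) x with hψ
  set G : Finset (Fin (n+1)) := Finset.univ.filter fun x => ψ x ≠ 0 with hG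
  -- part (a): ψ x = 0 → rows vanish at x
  have parta : ∀ x, ψ x = 0 → ∀ t, M (r t) x = 0 := by
    intro x hx
    set a : Fin (n+1) → k := fun l => ∑ t : Fin 4, if l = r t then φ t * M (r t) x else 0
      with ha
    have hvm : Matrix.vecMul a M = 0 := by
      funext v
      simp only [Matrix.vecMul, dotProduct, ha, Pi.zero_apply]
      have : ∀ l, (∑ t : Fin 4, if l = r t then φ t * M (r t) x else 0) * M l v
          = ∑ t : Fin 4, if l = r t then φ t * M (r t) x * M (r t) v else 0 := by
        intro l
        rw [Finset.sum_mul]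
        refine Finset.sum_congr rfl fun t _ => ?_
        by_cases h : l = r t
        · subst h; simp
        · simp [h]
      simp only [this]
      rw [Finset.sum_comm]
      have : ∀ t : Fin 4, (∑ l : Fin (n+1), if l = r t then φ t * M (r t) x * M (r t) v else 0)
          = φ t * M (r t) x * M (r t) v := by
        intro t
        simp [Finset.sum_ite_eq']
      simp only [this]
      by_cases hvx : v = x
      · subst hvx; exact hx
      · exact hpair x v (fun h => hvx h.symm)
    have haz : a = 0 := by
      have h1 : Matrix.vecMul (Matrix.vecMul a M) (↑U⁻¹ : Matrix _ _ k) = a := by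
        rw [Matrix.vecMul_vecMul, hMN, Matrix.vecMul_one]
      rw [hvm] at h1
      rw [← h1]
      funext v
      simp [Matrix.vecMul, dotProduct]
    intro t
    have h2 : a (r t) = φ t * M (r t) x := by
      simp only [ha]
      have : ∀ t' : Fin 4, (if r t = r t' then φ t' * M (r t') x else 0)
          = if t = t' then φ t' * M (r t') x else 0 := by
        intro t'
        by_cases h : t = t'
        · subst h; simp
        · rw [if_neg h, if_neg (fun hh => h (hr hh))]
      simp only [this]
      simp [Finset.sum_ite_eq]
      
    rw [haz] at h2
    have := h2.symm
    simp only [Pi.zero_apply] at this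
    rcases mul_eq_zero.mp this with h | h
    · exact absurd h (hφ t)
    · exact h
  refine ⟨G, ?_, ?_⟩
  · by_contra hcard
    push_neg at hcard
    obtain ⟨s, hsG, hs5⟩ := Finset.exists_subset_card_eq hcard
    set e := s.orderIsoOfFin hs5 with he
    set u : Fin 5 → Fin (n+1) := fun i => (e i : Fin (n+1)) with hu
    have hui : Function.Injective u := by
      intro i j hij
      have : (e i : Fin (n+1)) = e j := hij
      exact e.injective (Subtype.ext this)
    have huG : ∀ i, ψ (u i) ≠ 0 := by
      intro i
      have : u i ∈ G := hsG (e i).2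
      simpa [hG] using this
    set w : Fin 5 → (Fin 4 → k) := fun i t => M (r t) (u i) with hw
    have hnli : ¬ LinearIndependent k w := by
      intro hli
      have hle := hli.fintype_card_le_finrank
      simp [Module.finrank_pi] at hle
    obtain ⟨g, hg0, i0, hgi0⟩ := Fintype.not_linearIndependent_iff.mp hnli
    have hgt : ∀ t, ∑ i : Fin 5, g i * M (r t) (u i) = 0 := by
      intro t
      have := congrFun hg0 t
      simpa [hw] using this
    have hkey : g i0 * ψ (u i0) = 0 := by
      have expand : ∑ i : Fin 5, g i * (∑ t : Fin 4, φ t * M (r t) (u i) * M (r t) (u i0))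
          = g i0 * ψ (u i0) := by
        rw [Finset.sum_eq_single_of_mem i0 (Finset.mem_univ i0)
          (fun i _ hi => by rw [hpair (u i) (u i0) (fun h => hi (hui h)), mul_zero])]
      have swap : ∑ i : Fin 5, g i * (∑ t : Fin 4, φ t * M (r t) (u i) * M (r t) (u i0))
          = ∑ t : Fin 4, (φ t * M (r t) (u i0)) * (∑ i : Fin 5, g i * M (r t) (u i)) := by
        simp only [Finset.mul_sum]
        rw [Finset.sum_comm]
        refine Finset.sum_congr rfl fun t _ => Finset.sum_congr rfl fun i _ => by ring
      rw [← expand, swap]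
      simp only [hgt, mul_zero, Finset.sum_const_zero]
    rcases mul_eq_zero.mp hkey with h | h
    · exact hgi0 h
    · exact huG i0 h
  · intro t x hx
    by_contra hxG
    have : ψ x = 0 := by
      by_contra hne
      exact hxG (by simp [hG, hne])
    exact hx (parta x this t)
end
section
variable {k : Type*} [Field k] [IsAlgClosed k] [CharZero k] {n : ℕ}


lemma H4 (hn : 4 ≤ n) (M : Matrix (Fin (n+1)) (Fin (n+1)) k) (hM : IsUnit M)
    (hcfall : ∀ u v : Fin (n+1), u ≠ v → ∀ l : ℕ, 1 ≤ l → ∀ hl : l ≤ n,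
      M ⟨l, by omega⟩ u * M ⟨l, by omega⟩ v
        = (M ⟨0, by omega⟩ u * M ⟨0, by omega⟩ v) * (l:k)^2
          + (M ⟨2, by omega⟩ u * M ⟨2, by omega⟩ v - M ⟨1, by omega⟩ u * M ⟨1, by omega⟩ v
              - 3 * (M ⟨0, by omega⟩ u * M ⟨0, by omega⟩ v)) * (l:k)
          + (2 * (M ⟨1, by omega⟩ u * M ⟨1, by omega⟩ v) - M ⟨2, by omega⟩ u * M ⟨2, by omega⟩ v
              + 2 * (M ⟨0, by omega⟩ u * M ⟨0, by omega⟩ v))) :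
    ∀ F : Finset (Fin (n+1)), F.card = 4 →
      ∃ G : Finset (Fin (n+1)), G.card ≤ 4 ∧ ∀ p ∈ F, ∀ x, M p x ≠ 0 → x ∈ G := by
  have hkeyA : ∀ (u v : Fin (n+1)), u ≠ v → ∀ (a b c : ℕ) (ha : 1 ≤ a) (hab : a < b) (hbc : b < c) (hc : c ≤ n),
      ((a:k) - b) * ((b:k) - c) * ((c:k) - a) * (M ⟨0, by omega⟩ u * M ⟨0, by omega⟩ v)
        + ((b:k) - c) * (M ⟨a, by omega⟩ u * M ⟨a, by omega⟩ v)
        + ((c:k) - a) * (M ⟨b, by omega⟩ u * M ⟨b, by omega⟩ v)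
        + ((a:k) - b) * (M ⟨c, by omega⟩ u * M ⟨c, by omega⟩ v) = 0 := by
    intro u v huv a b c ha hab hbc hc
    have hcf := hcfall u v huv
    rw [hcf a (by omega) (by omega), hcf b (by omega) (by omega), hcf c (by omega) (by omega)]
    ring
  have hkeyB : ∀ (u v : Fin (n+1)), u ≠ v → ∀ (a b c d : ℕ) (ha : 1 ≤ a) (hab : a < b) (hbc : b < c)
      (hcd : c < d) (hd : d ≤ n),
      ((b:k) - c) * ((b:k) - d) * ((c:k) - d) * (M ⟨a, by omega⟩ u * M ⟨a, by omega⟩ v)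
        - ((a:k) - c) * ((a:k) - d) * ((c:k) - d) * (M ⟨b, by omega⟩ u * M ⟨b, by omega⟩ v)
        + ((a:k) - b) * ((a:k) - d) * ((b:k) - d) * (M ⟨c, by omega⟩ u * M ⟨c, by omega⟩ v)
        - ((a:k) - b) * ((a:k) - c) * ((b:k) - c) * (M ⟨d, by omega⟩ u * M ⟨d, by omega⟩ v)
        = 0 := by
    intro u v huv a b c d ha hab hbc hcd hd
    have hcf := hcfall u v huv
    rw [hcf a (by omega) (by omega), hcf b (by omega) (by omega), hcf c (by omega) (by omega),
      hcf d (by omega) (by omega)]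
    ring
  intro F hF
  set e := F.orderIsoOfFin hF with he
  set r : Fin 4 → Fin (n+1) := fun i => (e i : Fin (n+1)) with hr
  have hrmono : StrictMono r := fun i j hij => Subtype.coe_lt_coe.mpr (e.strictMono hij)
  have hrinj : Function.Injective r := hrmono.injective
  have hmem : ∀ p ∈ F, ∃ t, r t = p := fun p hp =>
    ⟨e.symm ⟨p, hp⟩, congrArg Subtype.val (e.apply_symm_apply ⟨p, hp⟩)⟩
  have h01 : (r 0).val < (r 1).val := hrmono (by decide)
  have h12 : (r 1).val < (r 2).val := hrmono (by decide)
  have h23 : (r 2).val < (r 3).val := hrmono (by decide)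
  have h3n : (r 3).val < n + 1 := (r 3).isLt
  clear hr he
  clear_value r
  clear e
  have main : ∃ G : Finset (Fin (n+1)), G.card ≤ 4 ∧ ∀ t x, M (r t) x ≠ 0 → x ∈ G := by
    by_cases h0 : (r 0).val = 0
    · -- type A
      obtain ⟨a, hav⟩ : ∃ m, (r 1).val = m := ⟨_, rfl⟩
      obtain ⟨b, hbv⟩ : ∃ m, (r 2).val = m := ⟨_, rfl⟩
      obtain ⟨c, hcv⟩ : ∃ m, (r 3).val = m := ⟨_, rfl⟩
      rw [hav] at h01 h12
      rw [hbv] at h12 h23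
      rw [hcv] at h23 h3n
      have ha : 1 ≤ a := by omega
      have hcn : c ≤ n := by omega
      have hcab : (a:k) ≠ (b:k) := by exact_mod_cast Nat.ne_of_lt h12
      have hcbc : (b:k) ≠ (c:k) := by exact_mod_cast Nat.ne_of_lt h23
      have hcac : (a:k) ≠ (c:k) := by exact_mod_cast Nat.ne_of_lt (by omega : a < c)
      set φ : Fin 4 → k :=
        ![((a:k) - b) * ((b:k) - c) * ((c:k) - a), (b:k) - c, (c:k) - a, (a:k) - b] with hφv
      have hφ : ∀ t, φ t ≠ 0 := by
        intro t
        fin_cases t <;> rw [hφv]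
        · exact mul_ne_zero (mul_ne_zero (sub_ne_zero.mpr hcab) (sub_ne_zero.mpr hcbc))
            (sub_ne_zero.mpr hcac.symm)
        · exact sub_ne_zero.mpr hcbc
        · exact sub_ne_zero.mpr hcac.symm
        · exact sub_ne_zero.mpr hcab
      have hpair : ∀ x y : Fin (n+1), x ≠ y → ∑ t : Fin 4, φ t * M (r t) x * M (r t) y = 0 := by
        intro x y hxy
        have hk := hkeyA x y hxy a b c ha h12 h23 hcn
        have hr0 : r 0 = ⟨0, by omega⟩ := Fin.ext h0
        have hr1 : r 1 = ⟨a, by omega⟩ := Fin.ext hav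
        have hr2 : r 2 = ⟨b, by omega⟩ := Fin.ext hbv
        have hr3 : r 3 = ⟨c, by omega⟩ := Fin.ext hcv
        rw [Fin.sum_univ_four]
        simp only [hr0, hr1, hr2, hr3]
        simp only [hφv, Matrix.cons_val_zero, Matrix.cons_val_one, Matrix.head_cons,
          Matrix.cons_val_two, Matrix.tail_cons, Matrix.cons_val_three]
        linear_combination hk
      exact rows_support M hM r hrinj φ hφ hpair
    · -- type B
      obtain ⟨a, hav⟩ : ∃ m, (r 0).val = m := ⟨_, rfl⟩
      obtain ⟨b, hbv⟩ : ∃ m, (r 1).val = m := ⟨_, rfl⟩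
      obtain ⟨c, hcv⟩ : ∃ m, (r 2).val = m := ⟨_, rfl⟩
      obtain ⟨d, hdv⟩ : ∃ m, (r 3).val = m := ⟨_, rfl⟩
      rw [hav] at h01 h0
      rw [hbv] at h01 h12
      rw [hcv] at h12 h23
      rw [hdv] at h23 h3n
      have ha : 1 ≤ a := by omega
      have hdn : d ≤ n := by omega
      have cab : (a:k) ≠ (b:k) := by exact_mod_cast Nat.ne_of_lt h01
      have cac : (a:k) ≠ (c:k) := by exact_mod_cast Nat.ne_of_lt (by omega : a < c)
      have cad : (a:k) ≠ (d:k) := by exact_mod_cast Nat.ne_of_lt (by omega : a < d)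
      have cbc : (b:k) ≠ (c:k) := by exact_mod_cast Nat.ne_of_lt h12
      have cbd : (b:k) ≠ (d:k) := by exact_mod_cast Nat.ne_of_lt (by omega : b < d)
      have ccd : (c:k) ≠ (d:k) := by exact_mod_cast Nat.ne_of_lt h23
      set φ : Fin 4 → k :=
        ![((b:k) - c) * ((b:k) - d) * ((c:k) - d),
          -(((a:k) - c) * ((a:k) - d) * ((c:k) - d)),
          ((a:k) - b) * ((a:k) - d) * ((b:k) - d),
          -(((a:k) - b) * ((a:k) - c) * ((b:k) - c))] with hφv
      have hφ : ∀ t, φ t ≠ 0 := by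
        intro t
        fin_cases t <;> rw [hφv]
        · exact mul_ne_zero (mul_ne_zero (sub_ne_zero.mpr cbc) (sub_ne_zero.mpr cbd))
            (sub_ne_zero.mpr ccd)
        · exact neg_ne_zero.mpr (mul_ne_zero (mul_ne_zero (sub_ne_zero.mpr cac)
            (sub_ne_zero.mpr cad)) (sub_ne_zero.mpr ccd))
        · exact mul_ne_zero (mul_ne_zero (sub_ne_zero.mpr cab) (sub_ne_zero.mpr cad))
            (sub_ne_zero.mpr cbd)
        · exact neg_ne_zero.mpr (mul_ne_zero (mul_ne_zero (sub_ne_zero.mpr cab)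
            (sub_ne_zero.mpr cac)) (sub_ne_zero.mpr cbc))
      have hpair : ∀ x y : Fin (n+1), x ≠ y → ∑ t : Fin 4, φ t * M (r t) x * M (r t) y = 0 := by
        intro x y hxy
        have hk := hkeyB x y hxy a b c d ha h01 h12 h23 hdn
        have hr0 : r 0 = ⟨a, by omega⟩ := Fin.ext hav
        have hr1 : r 1 = ⟨b, by omega⟩ := Fin.ext hbv
        have hr2 : r 2 = ⟨c, by omega⟩ := Fin.ext hcv
        have hr3 : r 3 = ⟨d, by omega⟩ := Fin.ext hdv
        rw [Fin.sum_univ_four]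
        simp only [hr0, hr1, hr2, hr3]
        simp only [hφv, Matrix.cons_val_zero, Matrix.cons_val_one, Matrix.head_cons,
          Matrix.cons_val_two, Matrix.tail_cons, Matrix.cons_val_three]
        linear_combination hk
      exact rows_support M hM r hrinj φ hφ hpair
  obtain ⟨G, hG4, hGsup⟩ := main
  refine ⟨G, hG4, ?_⟩
  intro p hp x hx
  obtain ⟨t, rfl⟩ := hmem p hp
  exact hGsup t x hx
end
section
variable {k : Type*} [Field k] {n : ℕ}

lemma endgame (hn : 4 ≤ n) (M : Matrix (Fin (n+1)) (Fin (n+1)) k) (hM : IsUnit M)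
    (H4 : ∀ F : Finset (Fin (n+1)), F.card = 4 →
      ∃ G : Finset (Fin (n+1)), G.card ≤ 4 ∧ ∀ p ∈ F, ∀ x, M p x ≠ 0 → x ∈ G) :
    (∀ i, ∃! j, M i j ≠ 0) ∧ (∀ j, ∃! i, M i j ≠ 0) := by
  classical
  obtain ⟨U, hU⟩ := hM
  set N : Matrix (Fin (n+1)) (Fin (n+1)) k := (↑(U⁻¹) : Matrix (Fin (n+1)) (Fin (n+1)) k) with hN
  have hMN : M * N = 1 := by rw [hN, ← hU]; exact U.mul_inv
  have hNM : N * M = 1 := by rw [hN, ← hU]; exact U.inv_mul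
  set T : Fin (n+1) → Finset (Fin (n+1)) :=
    fun p => Finset.univ.filter (fun x => M p x ≠ 0) with hT
  have hTmem : ∀ p x, x ∈ T p ↔ M p x ≠ 0 := by
    intro p x; simp [hT]
  have exists_not_mem : ∀ S : Finset (Fin (n+1)), S.card ≤ n → ∃ q, q ∉ S := by
    intro S hS
    by_contra hall
    push_neg at hall
    have : S = Finset.univ := Finset.eq_univ_iff_forall.mpr hall
    rw [this, Finset.card_univ, Fintype.card_fin] at hS
    omega
  have factZ : ∀ S : Finset (Fin (n+1)), (∀ p, T p ⊆ S) → n + 1 ≤ S.card := by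
    intro S hS
    by_contra h
    push_neg at h
    obtain ⟨x, hxS⟩ := exists_not_mem S (by omega)
    have hcol : ∀ p, M p x = 0 := by
      intro p
      by_contra hnz
      exact hxS (hS p ((hTmem p x).mpr hnz))
    have h1 : (N * M) x x = (1 : Matrix (Fin (n+1)) (Fin (n+1)) k) x x := by rw [hNM]
    rw [Matrix.mul_apply] at h1
    simp only [hcol, mul_zero, Finset.sum_const_zero, Matrix.one_apply_eq] at h1
    exact zero_ne_one h1
  -- sets of distinct points
  have card4 : ∀ (p1 p2 p3 q : Fin (n+1)), p1 ≠ p2 → p1 ≠ p3 → p1 ≠ q → p2 ≠ p3 → p2 ≠ q →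
      p3 ≠ q → ({p1, p2, p3, q} : Finset (Fin (n+1))).card = 4 := by
    intro p1 p2 p3 q h12 h13 h1q h23 h2q h3q
    rw [Finset.card_insert_of_notMem (by simp [h12, h13, h1q]),
      Finset.card_insert_of_notMem (by simp [h23, h2q]),
      Finset.card_insert_of_notMem (by simp [h3q]), Finset.card_singleton]
  have stepA : ∀ p1 p2 p3 : Fin (n+1), p1 ≠ p2 → p1 ≠ p3 → p2 ≠ p3 →
      (T p1 ∪ T p2 ∪ T p3).card ≤ 3 := by
    intro p1 p2 p3 h12 h13 h23
    -- bound 4 via a fourth point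
    have bound4 : ∀ q : Fin (n+1), q ∉ ({p1, p2, p3} : Finset (Fin (n+1))) →
        ∃ G : Finset (Fin (n+1)), G.card ≤ 4 ∧ T p1 ∪ T p2 ∪ T p3 ⊆ G ∧ T q ⊆ G := by
      intro q hq
      simp only [Finset.mem_insert, Finset.mem_singleton, not_or] at hq
      obtain ⟨hq1, hq2, hq3⟩ := hq
      obtain ⟨G, hG4, hGall⟩ := H4 {p1, p2, p3, q}
        (card4 p1 p2 p3 q h12 h13 (Ne.symm hq1) h23 (Ne.symm hq2) (Ne.symm hq3))
      refine ⟨G, hG4, ?_, ?_⟩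
      · intro x hx
        rcases Finset.mem_union.mp hx with hx' | hx'
        · rcases Finset.mem_union.mp hx' with hx'' | hx''
          · exact hGall p1 (by simp) x ((hTmem _ _).mp hx'')
          · exact hGall p2 (by simp) x ((hTmem _ _).mp hx'')
        · exact hGall p3 (by simp) x ((hTmem _ _).mp hx')
      · intro x hx
        exact hGall q (by simp) x ((hTmem _ _).mp hx)
    have c3 : ({p1, p2, p3} : Finset (Fin (n+1))).card ≤ 3 := by
      apply le_trans (Finset.card_insert_le _ _)
      have h := Finset.card_insert_le p2 ({p3} : Finset (Fin (n+1)))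
      simp only [Finset.card_singleton] at h
      omega
    obtain ⟨q0, hq0⟩ := exists_not_mem {p1, p2, p3} (by omega)
    obtain ⟨G0, hG04, hUsub, _⟩ := bound4 q0 hq0
    have hcard4 : (T p1 ∪ T p2 ∪ T p3).card ≤ 4 :=
      le_trans (Finset.card_le_card hUsub) hG04
    by_contra hgt
    push_neg at hgt
    have hcardeq : (T p1 ∪ T p2 ∪ T p3).card = 4 := by omega
    have hall : ∀ p, T p ⊆ T p1 ∪ T p2 ∪ T p3 := by
      intro p
      by_cases hp : p ∈ ({p1, p2, p3} : Finset (Fin (n+1)))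
      · simp only [Finset.mem_insert, Finset.mem_singleton] at hp
        rcases hp with rfl | rfl | rfl
        · exact fun x hx => Finset.mem_union_left _ (Finset.mem_union_left _ hx)
        · exact fun x hx => Finset.mem_union_left _ (Finset.mem_union_right _ hx)
        · exact fun x hx => Finset.mem_union_right _ hx
      · obtain ⟨G, hG4, hUsub', hTp⟩ := bound4 p hp
        have : T p1 ∪ T p2 ∪ T p3 = G :=
          Finset.eq_of_subset_of_card_le hUsub' (by omega)
        rw [← this] at hTp
        exact hTp
    have := factZ _ hall
    omega
  have stepB : ∀ p1 p2 : Fin (n+1), p1 ≠ p2 → (T p1 ∪ T p2).card ≤ 2 := by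
    intro p1 p2 h12
    have c2 : ({p1, p2} : Finset (Fin (n+1))).card ≤ 2 := by
      apply le_trans (Finset.card_insert_le _ _)
      simp only [Finset.card_singleton]
      omega
    obtain ⟨p3, hp3⟩ := exists_not_mem {p1, p2} (by omega)
    simp only [Finset.mem_insert, Finset.mem_singleton, not_or] at hp3
    obtain ⟨hq1, hq2⟩ := hp3
    have h3 := stepA p1 p2 p3 h12 (Ne.symm hq1) (Ne.symm hq2)
    have hle : (T p1 ∪ T p2).card ≤ 3 :=
      le_trans (Finset.card_le_card (Finset.subset_union_left)) h3
    by_contra hgt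
    push_neg at hgt
    have hcardeq : (T p1 ∪ T p2).card = 3 := by omega
    have hall : ∀ p, T p ⊆ T p1 ∪ T p2 := by
      intro p
      by_cases hp : p ∈ ({p1, p2} : Finset (Fin (n+1)))
      · simp only [Finset.mem_insert, Finset.mem_singleton] at hp
        rcases hp with rfl | rfl
        · exact fun x hx => Finset.mem_union_left _ hx
        · exact fun x hx => Finset.mem_union_right _ hx
      · simp only [Finset.mem_insert, Finset.mem_singleton, not_or] at hp
        obtain ⟨hpa, hpb⟩ := hp
        have h3' := stepA p1 p2 p h12 (Ne.symm hpa) (Ne.symm hpb)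
        have : T p1 ∪ T p2 = T p1 ∪ T p2 ∪ T p :=
          Finset.eq_of_subset_of_card_le (Finset.subset_union_left) (by omega)
        intro x hx
        rw [this]
        exact Finset.mem_union_right _ hx
    have := factZ _ hall
    omega
  have stepC : ∀ p : Fin (n+1), (T p).card ≤ 1 := by
    intro p
    have c1 : ({p} : Finset (Fin (n+1))).card ≤ 1 := by simp
    obtain ⟨p2, hp2⟩ := exists_not_mem {p} (by omega)
    simp only [Finset.mem_singleton] at hp2
    have h2 := stepB p p2 (Ne.symm hp2)
    have hle : (T p).card ≤ 2 :=
      le_trans (Finset.card_le_card (Finset.subset_union_left)) h2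
    by_contra hgt
    push_neg at hgt
    have hcardeq : (T p).card = 2 := by omega
    have hall : ∀ p', T p' ⊆ T p := by
      intro p'
      by_cases hp' : p' = p
      · subst hp'; exact subset_rfl
      · have h2' := stepB p p' (fun h => hp' h.symm)
        have : T p = T p ∪ T p' :=
          Finset.eq_of_subset_of_card_le (Finset.subset_union_left) (by omega)
        intro x hx
        rw [this]
        exact Finset.mem_union_right _ hx
    have := factZ _ hall
    omega
  have stepD : ∀ p : Fin (n+1), ∃ x, M p x ≠ 0 := by
    intro p
    by_contra hrow
    push_neg at hrow
    have h1 : (M * N) p p = (1 : Matrix (Fin (n+1)) (Fin (n+1)) k) p p := by rw [hMN]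
    rw [Matrix.mul_apply] at h1
    simp only [hrow, zero_mul, Finset.sum_const_zero, Matrix.one_apply_eq] at h1
    exact zero_ne_one h1
  -- each row support is a singleton
  have hsingle : ∀ p : Fin (n+1), ∃ x, T p = {x} := by
    intro p
    obtain ⟨x, hx⟩ := stepD p
    have hxT : x ∈ T p := (hTmem p x).mpr hx
    have h1 : (T p).card = 1 := le_antisymm (stepC p) (Finset.card_pos.mpr ⟨x, hxT⟩)
    exact Finset.card_eq_one.mp h1
  choose t ht using hsingle
  have hrowt : ∀ p x, M p x ≠ 0 ↔ x = t p := by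
    intro p x
    rw [← hTmem p x, ht p, Finset.mem_singleton]
  -- injectivity of t
  have hinj : Function.Injective t := by
    intro p1 p2 h12
    by_contra hne
    have hv1 : M p1 (t p1) ≠ 0 := (hrowt p1 (t p1)).mpr rfl
    have hv2 : M p2 (t p2) ≠ 0 := (hrowt p2 (t p2)).mpr rfl
    have e0 : (M * N) p1 p2 = 0 := by
      rw [hMN]; exact Matrix.one_apply_ne hne
    have e1 : (M * N) p2 p2 = 1 := by rw [hMN]; exact Matrix.one_apply_eq p2
    rw [Matrix.mul_apply] at e0 e1
    have hz : ∀ l, l ≠ t p1 → M p1 l * N l p2 = 0 := by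
      intro l hl
      have : M p1 l = 0 := by
        by_contra hnz
        exact hl ((hrowt p1 l).mp hnz)
      rw [this, zero_mul]
    have hz2 : ∀ l, l ≠ t p2 → M p2 l * N l p2 = 0 := by
      intro l hl
      have : M p2 l = 0 := by
        by_contra hnz
        exact hl ((hrowt p2 l).mp hnz)
      rw [this, zero_mul]
    rw [Finset.sum_eq_single_of_mem (t p1) (Finset.mem_univ _) (fun l _ hl => hz l hl)] at e0
    rw [Finset.sum_eq_single_of_mem (t p2) (Finset.mem_univ _) (fun l _ hl => hz2 l hl)] at e1
    rw [← h12] at e1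
    rcases mul_eq_zero.mp e0 with h | h
    · exact hv1 h
    · rw [h, mul_zero] at e1
      exact zero_ne_one e1
  have hsurj : Function.Surjective t := Finite.surjective_of_injective hinj
  constructor
  · intro p
    exact ⟨t p, (hrowt p (t p)).mpr rfl, fun x hx => (hrowt p x).mp hx⟩
  · intro x
    obtain ⟨p, rfl⟩ := hsurj x
    refine ⟨p, (hrowt p (t p)).mpr rfl, ?_⟩
    intro p' hp'
    have := (hrowt p' (t p)).mp hp'
    exact hinj this.symm
end

/-- For `n ≥ 4`, over an algebraically closed field of characteristic zero,
every invertible linear map preserving the solutions of the Büchi system of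
length `n` is a monomial matrix (a scalar permutation): every row and every
column has exactly one nonzero entry. -/
theorem buchi_linear_automorphisms_are_scalar_permutations
    {k : Type*} [Field k] [IsAlgClosed k] [CharZero k]
    (n : ℕ) (hn : 4 ≤ n)
    (M : Matrix (Fin (n + 1)) (Fin (n + 1)) k) (hM : IsUnit M)
    (hpres : ∀ x : Fin (n + 1) → k, SatisfiesBuchi n x →
      SatisfiesBuchi n (M.mulVec x)) :
    (∀ i, ∃! j, M i j ≠ 0) ∧ (∀ j, ∃! i, M i j ≠ 0) := by

  have hcfall : ∀ u v : Fin (n+1), u ≠ v → ∀ l : ℕ, 1 ≤ l → ∀ hl : l ≤ n,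
      M ⟨l, by omega⟩ u * M ⟨l, by omega⟩ v
        = (M ⟨0, by omega⟩ u * M ⟨0, by omega⟩ v) * (l:k)^2
          + (M ⟨2, by omega⟩ u * M ⟨2, by omega⟩ v - M ⟨1, by omega⟩ u * M ⟨1, by omega⟩ v
              - 3 * (M ⟨0, by omega⟩ u * M ⟨0, by omega⟩ v)) * (l:k)
          + (2 * (M ⟨1, by omega⟩ u * M ⟨1, by omega⟩ v) - M ⟨2, by omega⟩ u * M ⟨2, by omega⟩ v
              + 2 * (M ⟨0, by omega⟩ u * M ⟨0, by omega⟩ v)) :=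
    fun u v huv => closed_form hn M u v (rel_of_pres M hpres huv)
  exact endgame hn M hM (H4 hn M hM hcfall)
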